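/- arXiv:2307.09556 — 2 statements merged into one kernel-verified Lean document; each statement's English description precedes it below -/
import Mathlib

section
/- Let U ⊆ E be open, λ ∈ ℝ with λ ≠ 0, and X : E → E a vector field that is C² on U and satisfies curl X = λ • X on U (a Beltrami field). Then ΔX = −λ² • X on U; in particular, |curl X|² + ⟨ΔX, X⟩ = 0 pointwise on U. (This is the pointwise identity (3.3) of the paper specialized to the flat Euclidean case, where Ric(X,X) = 0.) -/
open RealInnerProductSpace

noncomputable section

/-- The flat Euclidean three-space. -/
abbrev E3 : Type := EuclideanSpace ℝ (Fin 3)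

/-- The standard orthonormal basis of `E3`. -/
def sb (i : Fin 3) : E3 := EuclideanSpace.single i (1 : ℝ)

/-- `pd X i j p` is `∂ᵢXⱼ(p)`, the `j`-th component of `fderiv ℝ X p (sb i)`. -/
def pd (X : E3 → E3) (i j : Fin 3) (p : E3) : ℝ := fderiv ℝ X p (sb i) j

/-- The divergence of a vector field on `E3`. -/
def vdiv (X : E3 → E3) (p : E3) : ℝ := pd X 0 0 p + pd X 1 1 p + pd X 2 2 p

/-- Interpret a triple of reals as a point of `E3`. -/
def toE3 (v : Fin 3 → ℝ) : E3 := (WithLp.equiv 2 (Fin 3 → ℝ)).symm v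

/-- The curl of a vector field on `E3`. -/
def vcurl (X : E3 → E3) (p : E3) : E3 :=
  toE3 ![pd X 1 2 p - pd X 2 1 p, pd X 2 0 p - pd X 0 2 p, pd X 0 1 p - pd X 1 0 p]

/-- The cross product on `E3`. -/
def cross3 (u v : E3) : E3 :=
  toE3 ![u 1 * v 2 - u 2 * v 1, u 2 * v 0 - u 0 * v 2, u 0 * v 1 - u 1 * v 0]

/-- The componentwise Laplacian of a vector field on `E3`. -/
def vlap (X : E3 → E3) (p : E3) : E3 :=
  toE3 (fun j => ∑ i : Fin 3, fderiv ℝ (fun q => fderiv ℝ X q (sb i) j) p (sb i))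

lemma diffat_coord {f : E3 → E3} {p : E3} (h : DifferentiableAt ℝ f p) (j : Fin 3) :
    DifferentiableAt ℝ (fun q => f q j) p :=
  ((EuclideanSpace.proj j (𝕜 := ℝ)).differentiableAt.comp p h : _)

lemma fderiv_coord {f : E3 → E3} {p : E3} (h : DifferentiableAt ℝ f p) (j k : Fin 3) :
    fderiv ℝ (fun q => f q j) p (sb k) = fderiv ℝ f p (sb k) j := by
  have := ((EuclideanSpace.proj j (𝕜 := ℝ)).hasFDerivAt.comp p h.hasFDerivAt).fderiv
  rw [show (fun q => f q j) = ⇑(EuclideanSpace.proj j (𝕜 := ℝ)) ∘ f from rfl, this]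
  rfl

lemma diffat_pd (X : E3 → E3) {p : E3} (h : DifferentiableAt ℝ (fderiv ℝ X) p) (i j : Fin 3) :
    DifferentiableAt ℝ (fun q => fderiv ℝ X q (sb i) j) p :=
  ((((EuclideanSpace.proj j (𝕜 := ℝ)).comp
      (ContinuousLinearMap.apply ℝ E3 (sb i))).differentiableAt.comp p h) : _)

lemma fderiv_pd (X : E3 → E3) {p : E3} (h : DifferentiableAt ℝ (fderiv ℝ X) p) (i j k : Fin 3) :
    fderiv ℝ (fun q => fderiv ℝ X q (sb i) j) p (sb k)
      = fderiv ℝ (fderiv ℝ X) p (sb k) (sb i) j := by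
  set L := (EuclideanSpace.proj j (𝕜 := ℝ)).comp (ContinuousLinearMap.apply ℝ E3 (sb i)) with hL
  have h2 := (L.hasFDerivAt.comp p h.hasFDerivAt).fderiv
  rw [show (fun q => fderiv ℝ X q (sb i) j) = ⇑L ∘ (fderiv ℝ X) from rfl, h2]
  rfl

lemma beltrami_alg (T : Fin 3 → Fin 3 → Fin 3 → ℝ) (d : Fin 3 → Fin 3 → ℝ)
    (x : Fin 3 → ℝ) (lam : ℝ)
    (sym : ∀ a b j, T a b j = T b a j)
    (eA : ∀ k, T k 1 2 - T k 2 1 = lam * d k 0)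
    (eB : ∀ k, T k 2 0 - T k 0 2 = lam * d k 1)
    (eC : ∀ k, T k 0 1 - T k 1 0 = lam * d k 2)
    (hS : ∀ k, T k 0 0 + T k 1 1 + T k 2 2 = 0)
    (hc0 : d 1 2 - d 2 1 = lam * x 0) (hc1 : d 2 0 - d 0 2 = lam * x 1)
    (hc2 : d 0 1 - d 1 0 = lam * x 2) :
    (T 0 0 0 + T 1 1 0 + T 2 2 0 = -(lam ^ 2) * x 0) ∧
      (T 0 0 1 + T 1 1 1 + T 2 2 1 = -(lam ^ 2) * x 1) ∧
      (T 0 0 2 + T 1 1 2 + T 2 2 2 = -(lam ^ 2) * x 2) := by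
  refine ⟨?_, ?_, ?_⟩
  · linear_combination hS 0 - eC 1 + eB 2 + sym 1 0 1 + sym 2 0 2 - lam * hc0
  · linear_combination hS 1 + eC 0 - eA 2 + sym 0 1 0 + sym 2 1 2 - lam * hc1
  · linear_combination hS 2 - eB 0 + eA 1 + sym 0 2 0 + sym 1 2 1 - lam * hc2

/-- For a Beltrami field `curl X = λ • X` (`λ ≠ 0`), one has `Δ X = -λ² • X`; in
particular `|curl X|² + ⟨Δ X, X⟩ = 0` pointwise. Flat Euclidean case of (3.3). -/
theorem beltrami_laplacian (U : Set E3) (hU : IsOpen U) (lam : ℝ) (hlam : lam ≠ 0)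
    (X : E3 → E3) (hX : ContDiffOn ℝ 2 X U)
    (hBeltrami : ∀ p ∈ U, vcurl X p = lam • X p) :
    (∀ p ∈ U, vlap X p = (-(lam ^ 2)) • X p) ∧
      (∀ p ∈ U, ‖vcurl X p‖ ^ 2 + ⟪vlap X p, X p⟫ = 0) := by
  have hXd : ∀ q ∈ U, DifferentiableAt ℝ X q := fun q hq =>
    (hX.contDiffAt (hU.mem_nhds hq)).differentiableAt (by norm_num)
  have hfd : ContDiffOn ℝ 1 (fun q => fderiv ℝ X q) U :=
    hX.fderiv_of_isOpen hU (by norm_num)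
  have hDf : ∀ q ∈ U, DifferentiableAt ℝ (fderiv ℝ X) q := fun q hq =>
    (hfd.contDiffAt (hU.mem_nhds hq)).differentiableAt (by norm_num)
  have hsym : ∀ q ∈ U, ∀ v w, fderiv ℝ (fderiv ℝ X) q v w = fderiv ℝ (fderiv ℝ X) q w v :=
    fun q hq => (hX.contDiffAt (hU.mem_nhds hq)).isSymmSndFDerivAt (by simp)
  -- pointwise curl equations
  have hc : ∀ q ∈ U, (fderiv ℝ X q (sb 1) 2 - fderiv ℝ X q (sb 2) 1 = lam * X q 0)
      ∧ (fderiv ℝ X q (sb 2) 0 - fderiv ℝ X q (sb 0) 2 = lam * X q 1)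
      ∧ (fderiv ℝ X q (sb 0) 1 - fderiv ℝ X q (sb 1) 0 = lam * X q 2) := by
    intro q hq
    have h := hBeltrami q hq
    have h0 := congrArg (fun v : E3 => v 0) h
    have h1 := congrArg (fun v : E3 => v 1) h
    have h2 := congrArg (fun v : E3 => v 2) h
    simp only [vcurl, toE3, pd, WithLp.equiv_symm_apply, PiLp.toLp_apply, Matrix.cons_val_zero,
      Matrix.cons_val_one, Matrix.head_cons, Matrix.cons_val_two, Matrix.tail_cons,
      PiLp.smul_apply, smul_eq_mul] at h0 h1 h2
    exact ⟨h0, h1, h2⟩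
  -- differentiated curl equations
  have key : ∀ q ∈ U, ∀ k : Fin 3,
      (fderiv ℝ (fderiv ℝ X) q (sb k) (sb 1) 2 - fderiv ℝ (fderiv ℝ X) q (sb k) (sb 2) 1
          = lam * fderiv ℝ X q (sb k) 0)
      ∧ (fderiv ℝ (fderiv ℝ X) q (sb k) (sb 2) 0 - fderiv ℝ (fderiv ℝ X) q (sb k) (sb 0) 2
          = lam * fderiv ℝ X q (sb k) 1)
      ∧ (fderiv ℝ (fderiv ℝ X) q (sb k) (sb 0) 1 - fderiv ℝ (fderiv ℝ X) q (sb k) (sb 1) 0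
          = lam * fderiv ℝ X q (sb k) 2) := by
    intro q hq k
    have hDq := hDf q hq
    have hXq := hXd q hq
    refine ⟨?_, ?_, ?_⟩
    · have heq : fderiv ℝ (fun r => fderiv ℝ X r (sb 1) 2 - fderiv ℝ X r (sb 2) 1) q
          = fderiv ℝ (fun r => lam * X r 0) q :=
        Filter.EventuallyEq.fderiv_eq
          (by filter_upwards [hU.mem_nhds hq] with r hr using (hc r hr).1)
      rw [fderiv_fun_sub (diffat_pd X hDq 1 2) (diffat_pd X hDq 2 1),
        fderiv_const_mul (diffat_coord hXq 0) lam] at heq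
      have hl := congrArg (fun L : E3 →L[ℝ] ℝ => L (sb k)) heq
      simpa [fderiv_pd X hDq 1 2 k, fderiv_pd X hDq 2 1 k, fderiv_coord hXq 0 k] using hl
    · have heq : fderiv ℝ (fun r => fderiv ℝ X r (sb 2) 0 - fderiv ℝ X r (sb 0) 2) q
          = fderiv ℝ (fun r => lam * X r 1) q :=
        Filter.EventuallyEq.fderiv_eq
          (by filter_upwards [hU.mem_nhds hq] with r hr using (hc r hr).2.1)
      rw [fderiv_fun_sub (diffat_pd X hDq 2 0) (diffat_pd X hDq 0 2),
        fderiv_const_mul (diffat_coord hXq 1) lam] at heq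
      have hl := congrArg (fun L : E3 →L[ℝ] ℝ => L (sb k)) heq
      simpa [fderiv_pd X hDq 2 0 k, fderiv_pd X hDq 0 2 k, fderiv_coord hXq 1 k] using hl
    · have heq : fderiv ℝ (fun r => fderiv ℝ X r (sb 0) 1 - fderiv ℝ X r (sb 1) 0) q
          = fderiv ℝ (fun r => lam * X r 2) q :=
        Filter.EventuallyEq.fderiv_eq
          (by filter_upwards [hU.mem_nhds hq] with r hr using (hc r hr).2.2)
      rw [fderiv_fun_sub (diffat_pd X hDq 0 1) (diffat_pd X hDq 1 0),
        fderiv_const_mul (diffat_coord hXq 2) lam] at heq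
      have hl := congrArg (fun L : E3 →L[ℝ] ℝ => L (sb k)) heq
      simpa [fderiv_pd X hDq 0 1 k, fderiv_pd X hDq 1 0 k, fderiv_coord hXq 2 k] using hl
  -- divergence vanishes on U
  have hdiv : ∀ q ∈ U, fderiv ℝ X q (sb 0) 0 + fderiv ℝ X q (sb 1) 1
      + fderiv ℝ X q (sb 2) 2 = 0 := by
    intro q hq
    obtain ⟨a0, -, -⟩ := key q hq 0
    obtain ⟨-, b1, -⟩ := key q hq 1
    obtain ⟨-, -, c2⟩ := key q hq 2
    have e1 := congrArg (fun v : E3 => v 2) (hsym q hq (sb 0) (sb 1))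
    have e2 := congrArg (fun v : E3 => v 1) (hsym q hq (sb 0) (sb 2))
    have e3 := congrArg (fun v : E3 => v 0) (hsym q hq (sb 1) (sb 2))
    simp only at e1 e2 e3
    have hz : lam * (fderiv ℝ X q (sb 0) 0 + fderiv ℝ X q (sb 1) 1
        + fderiv ℝ X q (sb 2) 2) = 0 := by linarith
    exact (mul_eq_zero.mp hz).resolve_left hlam
  -- main Laplacian identity
  have hmain : ∀ p ∈ U, vlap X p = (-(lam ^ 2)) • X p := by
    intro p hp
    have hDp := hDf p hp
    -- derivative of divergence is zero
    have hdiveq : fderiv ℝ (fun q => fderiv ℝ X q (sb 0) 0 + fderiv ℝ X q (sb 1) 1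
        + fderiv ℝ X q (sb 2) 2) p = 0 := by
      have heq : fderiv ℝ (fun q => fderiv ℝ X q (sb 0) 0 + fderiv ℝ X q (sb 1) 1
          + fderiv ℝ X q (sb 2) 2) p = fderiv ℝ (fun _ : E3 => (0 : ℝ)) p :=
        Filter.EventuallyEq.fderiv_eq
          (by filter_upwards [hU.mem_nhds hp] with r hr using hdiv r hr)
      simpa using heq
    have hadd := (((diffat_pd X hDp 0 0).hasFDerivAt.add
        (diffat_pd X hDp 1 1).hasFDerivAt).add (diffat_pd X hDp 2 2).hasFDerivAt).fderiv
    have hS : ∀ k : Fin 3, fderiv ℝ (fderiv ℝ X) p (sb k) (sb 0) 0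
        + fderiv ℝ (fderiv ℝ X) p (sb k) (sb 1) 1
        + fderiv ℝ (fderiv ℝ X) p (sb k) (sb 2) 2 = 0 := by
      intro k
      have h := congrArg (fun L : E3 →L[ℝ] ℝ => L (sb k)) (hadd.symm.trans hdiveq)
      simpa [fderiv_pd X hDp 0 0 k, fderiv_pd X hDp 1 1 k, fderiv_pd X hDp 2 2 k] using h
    have hsymT : ∀ a b j : Fin 3, fderiv ℝ (fderiv ℝ X) p (sb a) (sb b) j
        = fderiv ℝ (fderiv ℝ X) p (sb b) (sb a) j := fun a b j =>
      congrArg (fun v : E3 => v j) (hsym p hp (sb a) (sb b))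
    obtain ⟨hc0, hc1, hc2⟩ := hc p hp
    obtain ⟨g0, g1, g2⟩ := beltrami_alg
      (fun a b j => fderiv ℝ (fderiv ℝ X) p (sb a) (sb b) j)
      (fun i j => fderiv ℝ X p (sb i) j) (fun j => X p j) lam
      hsymT (fun k => (key p hp k).1) (fun k => (key p hp k).2.1)
      (fun k => (key p hp k).2.2) hS hc0 hc1 hc2
    have hvlapj : ∀ j : Fin 3, vlap X p j
        = fderiv ℝ (fderiv ℝ X) p (sb 0) (sb 0) j
          + fderiv ℝ (fderiv ℝ X) p (sb 1) (sb 1) j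
          + fderiv ℝ (fderiv ℝ X) p (sb 2) (sb 2) j := by
      intro j
      simp [vlap, toE3, Fin.sum_univ_three, fderiv_pd X hDp 0 j 0, fderiv_pd X hDp 1 j 1,
        fderiv_pd X hDp 2 j 2]
    have hcomp : ∀ j : Fin 3, vlap X p j = ((-(lam ^ 2)) • X p) j := by
      intro j
      rw [hvlapj j]
      fin_cases j
      · simpa using g0
      · simpa using g1
      · simpa using g2
    exact PiLp.ext hcomp
  refine ⟨hmain, fun p hp => ?_⟩
  rw [hBeltrami p hp, hmain p hp, real_inner_smul_left, real_inner_self_eq_norm_sq,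
    norm_smul]
  simp [mul_pow, Real.norm_eq_abs, sq_abs]
end
end

section
/- Let U ⊆ E be open and X : E → E a vector field that is C² on U and divergence free on U (div X = 0 on U). Then for every p ∈ U, div(∇_X X)(p) = ½ |L_X g|²(p) − |∇X|²(p), where ∇_X X is the vector field p ↦ fderiv ℝ X p (X(p)), |∇X|²(p) = Σᵢⱼ (∂ᵢXⱼ(p))², and |L_X g|²(p) = Σᵢⱼ (∂ᵢXⱼ(p) + ∂ⱼXᵢ(p))². (This is the Bochner formula (3.5) of the paper, div(∇_X X) = Ric(X,X) + ½|L_X g|² − |∇X|², specialized to the flat Euclidean case where Ric = 0.) -/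
open RealInnerProductSpace

noncomputable section

/- In coordinates `∇_X X = (DX) X`, so `∂ᵢ(∇_X X)ᵢ = Σⱼ ∂ᵢXⱼ ∂ⱼXᵢ + Σⱼ Xⱼ ∂ᵢ∂ⱼXᵢ`. Summing over `i` and
using the symmetry of second derivatives, the second part is `X · ∇(div X)`, which vanishes where `div X`
is locally zero; the first part `tr((DX)²) = Σᵢⱼ ∂ᵢXⱼ ∂ⱼXᵢ` equals `½ Σᵢⱼ (∂ᵢXⱼ + ∂ⱼXᵢ)² - Σᵢⱼ (∂ᵢXⱼ)²`. -/

theorem Finset.sum_sum_mul_swap_eq {ι : Type*} [Fintype ι] (a : ι → ι → ℝ) :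
    ∑ i, ∑ j, a i j * a j i
      = 1 / 2 * ∑ i, ∑ j, (a i j + a j i) ^ 2 - ∑ i, ∑ j, a i j ^ 2 := by
  have hswap : ∑ i, ∑ j, a j i ^ 2 = ∑ i, ∑ j, a i j ^ 2 := Finset.sum_comm
  simp only [add_sq, Finset.sum_add_distrib, hswap, mul_assoc, ← Finset.mul_sum]
  ring

lemma clm_apply_eq_sum_sb (A : E3 →L[ℝ] E3) (v : E3) (k : Fin 3) :
    A v k = ∑ j, v j * A (sb j) k := by
  conv_lhs => rw [← (EuclideanSpace.basisFun (Fin 3) ℝ).sum_repr v]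
  simp [sb, map_sum]

lemma vdiv_eq_sum_pd (X : E3 → E3) (p : E3) : vdiv X p = ∑ i, pd X i i p := by
  simp [vdiv, Fin.sum_univ_three]

lemma hasFDerivAt_pd {X : E3 → E3} {p : E3} (hD : DifferentiableAt ℝ (fderiv ℝ X) p)
    (i j : Fin 3) :
    HasFDerivAt (pd X i j)
      ((EuclideanSpace.proj j).comp ((ContinuousLinearMap.apply ℝ E3 (sb i)).comp
        (fderiv ℝ (fderiv ℝ X) p))) p :=
  ((EuclideanSpace.proj j).comp (ContinuousLinearMap.apply ℝ E3 (sb i))).hasFDerivAt.comp p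
    hD.hasFDerivAt

lemma fderiv_vdiv_apply {X : E3 → E3} {p : E3} (hD : DifferentiableAt ℝ (fderiv ℝ X) p)
    (u : E3) : fderiv ℝ (vdiv X) p u = ∑ i, fderiv ℝ (fderiv ℝ X) p u (sb i) i := by
  have h : HasFDerivAt (vdiv X) (∑ i, _) p :=
    (HasFDerivAt.sum fun i _ => hasFDerivAt_pd hD i i).congr_of_eventuallyEq
      (Filter.Eventually.of_forall fun q => vdiv_eq_sum_pd X q)
  simp [h.fderiv]

theorem vdiv_fderiv_apply_self {X : E3 → E3} {p : E3} (hX : ContDiffAt ℝ 2 X p) :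
    vdiv (fun q => fderiv ℝ X q (X q)) p
      = ∑ i, ∑ j, pd X i j p * pd X j i p + fderiv ℝ (vdiv X) p (X p) := by
  have hD : DifferentiableAt ℝ (fderiv ℝ X) p :=
    (hX.fderiv_right (by norm_num)).differentiableAt one_ne_zero
  set A := fderiv ℝ X p
  set B := fderiv ℝ (fderiv ℝ X) p
  have hsymm : ∀ v w, B v w = B w v := hX.isSymmSndFDerivAt (by simp)
  have hderiv : fderiv ℝ (fun q => fderiv ℝ X q (X q)) p = A.comp A + B.flip (X p) :=
    fderiv_clm_apply hD (hX.differentiableAt two_ne_zero)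
  have hquad (i : Fin 3) : A (A (sb i)) i = ∑ j, pd X i j p * pd X j i p :=
    clm_apply_eq_sum_sb A _ i
  have hlin : ∑ i, B (sb i) (X p) i = fderiv ℝ (vdiv X) p (X p) := by
    simp only [hsymm _ (X p), fderiv_vdiv_apply hD, B]
  rw [vdiv_eq_sum_pd, ← hlin, ← Finset.sum_add_distrib]
  refine Finset.sum_congr rfl fun i _ => ?_
  rw [← hquad]
  simp [pd, hderiv]

/-- Bochner formula (3.5) for a divergence-free `C²` field, flat Euclidean case
(`Ric = 0`): `div (∇_X X) = ½ |L_X g|² - |∇X|²`. -/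
theorem bochner_formula (U : Set E3) (hU : IsOpen U) (X : E3 → E3)
    (hX : ContDiffOn ℝ 2 X U) (hdiv : ∀ p ∈ U, vdiv X p = 0) :
    ∀ p ∈ U, vdiv (fun q => fderiv ℝ X q (X q)) p
      = (1 / 2) * (∑ i : Fin 3, ∑ j : Fin 3, (pd X i j p + pd X j i p) ^ 2)
        - ∑ i : Fin 3, ∑ j : Fin 3, (pd X i j p) ^ 2 := by
  intro p hp
  have hU_nhds : U ∈ nhds p := hU.mem_nhds hp
  have hdiv_locally : vdiv X =ᶠ[nhds p] fun _ => 0 := Filter.eventually_of_mem hU_nhds hdiv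
  rw [vdiv_fderiv_apply_self (hX.contDiffAt hU_nhds), hdiv_locally.fderiv_eq, fderiv_const_apply,
    zero_apply, add_zero, Finset.sum_sum_mul_swap_eq]
end
end
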